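/- arXiv:2506.05505 — 2 statements merged into one kernel-verified Lean document; each statement's English description precedes it below -/
import Mathlib

section
/- Martingale gluing lemma I (characterization): Let μ₁ ⪯_c μ₂ ⪯_c μ₃ be probability measures on compact subsets of ℝ^d in convex order, and let π¹² = μ₂ ⊗ κ¹₂ ∈ Π_M(μ₁, μ₂) and π²³ = μ₂ ⊗ κ³₂ ∈ Π_M(μ₂, μ₃) be martingale couplings (disintegrated with respect to the variable x₂). Then a measure π ∈ Π_M(μ₁, μ₂, μ₃) satisfies Proj₁₂(π) = π¹² and Proj₂₃(π) = π²³ if and only if, writing π = μ₂ ⊗ κ¹³₂ for its disintegration over x₂, for μ₂-a.e. x₂ the conditional measure κ¹³₂(x₂, ·, ·) belongs to Π̄(F_{x₂}, κ¹₂(x₂,·), κ³₂(x₂,·)), where F_{x₂} is the constant function F_{x₂}(x₁) = x₂; that is, κ¹³₂(x₂,·,·) is a coupling of κ¹₂(x₂,·) and κ³₂(x₂,·) whose conditional barycenter of x₃ given x₁ equals x₂ for κ¹₂(x₂,·)-a.e. x₁. -/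
open MeasureTheory ProbabilityTheory Filter Topology

noncomputable section

namespace MOT

/-- Euclidean space ℝ^d. -/
abbrev Euc (d : ℕ) : Type := EuclideanSpace ℝ (Fin d)

variable {d : ℕ}

/-- Convex order of measures on ℝ^d: `μ ⪯_c ν` iff `∫ φ dμ ≤ ∫ φ dν` for every
convex function `φ`. -/
def ConvexOrder (μ ν : Measure (Euc d)) : Prop :=
  ∀ φ : Euc d → ℝ, ConvexOn ℝ Set.univ φ → ∫ x, φ x ∂μ ≤ ∫ x, φ x ∂ν

/-- `π` is a two-period martingale coupling of `μ` and `ν`: it has marginals `μ`, `ν`,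
and its disintegration `κ` over the first variable has barycenter `x` at `μ`-a.e. `x`. -/
def IsMartCoupling2 (μ ν : Measure (Euc d)) (π : Measure (Euc d × Euc d)) : Prop :=
  π.map Prod.snd = ν ∧
  ∃ κ : Kernel (Euc d) (Euc d), IsMarkovKernel κ ∧ π = μ ⊗ₘ κ ∧
    ∀ᵐ x ∂μ, ∫ y, y ∂(κ x) = x

/-- `π` is a three-period martingale coupling of `μ₁, μ₂, μ₃`. -/
def IsMartCoupling3 (μ₁ μ₂ μ₃ : Measure (Euc d)) (π : Measure (Euc d × Euc d × Euc d)) : Prop :=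
  π.map (fun q => q.1) = μ₁ ∧
  π.map (fun q => q.2.1) = μ₂ ∧
  π.map (fun q => q.2.2) = μ₃ ∧
  ∃ (κ₁ : Kernel (Euc d) (Euc d)) (κ₂ : Kernel (Euc d × Euc d) (Euc d)),
    IsMarkovKernel κ₁ ∧ IsMarkovKernel κ₂ ∧
    π = ((μ₁ ⊗ₘ κ₁) ⊗ₘ κ₂).map (fun q => (q.1.1, q.1.2, q.2)) ∧
    (∀ᵐ x ∂μ₁, ∫ y, y ∂(κ₁ x) = x) ∧
    (∀ᵐ q ∂(μ₁ ⊗ₘ κ₁), ∫ z, z ∂(κ₂ q) = q.2)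

/-- Membership in `Π̄(F, σX, σZ)`: couplings of `σX` and `σZ` whose disintegration `κ`
over the first variable satisfies `∫ z κ(x, dz) = F x` for `σX`-a.e. `x`. -/
def MemPiBar (F : Euc d → Euc d) (σX σZ : Measure (Euc d))
    (π : Measure (Euc d × Euc d)) : Prop :=
  π.map Prod.snd = σZ ∧
  ∃ κ : Kernel (Euc d) (Euc d), IsMarkovKernel κ ∧ π = σX ⊗ₘ κ ∧
    ∀ᵐ x ∂σX, ∫ z, z ∂(κ x) = F x


section Helpers

variable {α β γ Ω : Type*} [MeasurableSpace α] [MeasurableSpace β] [MeasurableSpace γ]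
  [MeasurableSpace Ω] [StandardBorelSpace Ω] [Nonempty Ω]

lemma map_compProd_snd (μ : Measure α) [SFinite μ] (κ : Kernel α β) [IsSFiniteKernel κ]
    {f : β → γ} (hf : Measurable f) :
    (μ ⊗ₘ κ).map (fun p => (p.1, f p.2)) = μ ⊗ₘ (κ.map f) := by
  ext s hs
  rw [Measure.map_apply
      ((measurable_fst.prodMk (hf.comp measurable_snd) : Measurable fun p : α × β => (p.1, f p.2)))
      hs,
    Measure.compProd_apply (hs.preimage
      ((measurable_fst.prodMk (hf.comp measurable_snd) : Measurable fun p : α × β => (p.1, f p.2)))),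
    Measure.compProd_apply hs]
  refine lintegral_congr fun a => ?_
  rw [Kernel.map_apply' _ hf _ (measurable_prodMk_left hs)]
  rfl

lemma kernel_ae_eq_of_compProd_eq {μ : Measure α} [IsFiniteMeasure μ]
    {κ η : Kernel α Ω} [IsMarkovKernel κ] [IsMarkovKernel η]
    (h : μ ⊗ₘ κ = μ ⊗ₘ η) : ∀ᵐ a ∂μ, κ a = η a := by
  have hfst : (μ ⊗ₘ κ).fst = μ := Measure.fst_compProd μ κ
  have h1 : ∀ᵐ a ∂(μ ⊗ₘ κ).fst, κ a = (μ ⊗ₘ κ).condKernel a :=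
    eq_condKernel_of_measure_eq_compProd κ (by rw [hfst])
  have h2 : ∀ᵐ a ∂(μ ⊗ₘ κ).fst, η a = (μ ⊗ₘ κ).condKernel a :=
    eq_condKernel_of_measure_eq_compProd η (by rw [hfst, h])
  rw [hfst] at h1 h2
  filter_upwards [h1, h2] with a ha1 ha2 using ha1.trans ha2.symm

lemma kernel_compProd_apply' (κ : Kernel α β) [IsSFiniteKernel κ]
    (η : Kernel (α × β) γ) [IsSFiniteKernel η] (a : α) :
    (κ ⊗ₖ η) a = (κ a) ⊗ₘ (η.comap (fun b => (a, b)) measurable_prodMk_left) := by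
  ext s hs
  rw [Kernel.compProd_apply hs, Measure.compProd_apply hs]
  rfl

lemma map_compProd_compProd (μ : Measure α) [SFinite μ]
    (ξ : Kernel α β) [IsSFiniteKernel ξ] (η : Kernel (α × β) γ) [IsSFiniteKernel η] :
    (μ ⊗ₘ (ξ ⊗ₖ η)).map (fun p => ((p.2.1, p.1), p.2.2))
      = ((μ ⊗ₘ ξ).map Prod.swap) ⊗ₘ (η.comap Prod.swap measurable_swap) := by
  have hψ : Measurable fun p : α × β × γ => ((p.2.1, p.1), p.2.2) :=
    ((measurable_snd.fst.prodMk measurable_fst).prodMk measurable_snd.snd)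
  ext s hs
  rw [Measure.map_apply hψ hs, Measure.compProd_apply (hs.preimage hψ),
      Measure.compProd_apply hs,
      lintegral_map (Kernel.measurable_kernel_prodMk_left
        (κ := η.comap Prod.swap measurable_swap) hs) measurable_swap,
      Measure.lintegral_compProd]
  · refine lintegral_congr fun a => ?_
    rw [Kernel.compProd_apply (measurable_prodMk_left (hs.preimage hψ))]
    refine lintegral_congr fun b => ?_
    rw [Kernel.comap_apply]
    rfl
  · exact (Kernel.measurable_kernel_prodMk_left
        (κ := η.comap Prod.swap measurable_swap) hs).comp measurable_swap

lemma map_swap_inj {ρ σ : Measure (α × β)} (h : ρ.map Prod.swap = σ.map Prod.swap) : ρ = σ := by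
  have := congrArg (Measure.map Prod.swap) h
  rw [Measure.map_map measurable_swap measurable_swap,
    Measure.map_map measurable_swap measurable_swap, Prod.swap_swap_eq] at this
  simp only [Measure.map_id] at this
  exact this

end Helpers

/-- **Martingale gluing lemma I (characterization).**
Given martingale couplings `π¹² = μ₂ ⊗ κ¹₂ ∈ Π_M(μ₁, μ₂)` and `π²³ = μ₂ ⊗ κ³₂ ∈ Π_M(μ₂, μ₃)`
(disintegrated over the middle variable `x₂`), a three-period measure
`π = μ₂ ⊗ κ¹³₂ ∈ Π_M(μ₁, μ₂, μ₃)` with `Proj₁₂ π = π¹²` and `Proj₂₃ π = π²³` is characterized by: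
for `μ₂`-a.e. `x₂`, `κ¹³₂(x₂, ·, ·) ∈ Π̄(F_{x₂}, κ¹₂(x₂,·), κ³₂(x₂,·))` where `F_{x₂} ≡ x₂`. -/
theorem gluing_lemma_I {d : ℕ}
    (μ₁ μ₂ μ₃ : Measure (Euc d))
    [IsProbabilityMeasure μ₁] [IsProbabilityMeasure μ₂] [IsProbabilityMeasure μ₃]
    (X₁ X₂ X₃ : Set (Euc d))
    (hX₁ : IsCompact X₁) (hX₂ : IsCompact X₂) (hX₃ : IsCompact X₃)
    (hμ₁X : μ₁ X₁ᶜ = 0) (hμ₂X : μ₂ X₂ᶜ = 0) (hμ₃X : μ₃ X₃ᶜ = 0)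
    (h12 : ConvexOrder μ₁ μ₂) (h23 : ConvexOrder μ₂ μ₃)
    (κ12 κ32 : Kernel (Euc d) (Euc d))
    (hκ12 : IsMarkovKernel κ12) (hκ32 : IsMarkovKernel κ32)
    (π12 π23 : Measure (Euc d × Euc d))
    (hπ12dis : π12 = (μ₂ ⊗ₘ κ12).map Prod.swap)
    (hπ23dis : π23 = μ₂ ⊗ₘ κ32)
    (hπ12M : IsMartCoupling2 μ₁ μ₂ π12)
    (hπ23M : IsMartCoupling2 μ₂ μ₃ π23)
    (π : Measure (Euc d × Euc d × Euc d))
    (κ13 : Kernel (Euc d) (Euc d × Euc d))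
    (hκ13 : IsMarkovKernel κ13)
    (hπdis : π = (μ₂ ⊗ₘ κ13).map (fun q => (q.2.1, q.1, q.2.2))) :
    (IsMartCoupling3 μ₁ μ₂ μ₃ π ∧
        π.map (fun q => (q.1, q.2.1)) = π12 ∧
        π.map (fun q => (q.2.1, q.2.2)) = π23)
      ↔ (∀ᵐ x₂ ∂μ₂, MemPiBar (fun _ => x₂) (κ12 x₂) (κ32 x₂) (κ13 x₂)) := by

  haveI := hκ12; haveI := hκ32; haveI := hκ13
  obtain ⟨hπ12snd, κ₁, hκ₁M, hπ12eq, hκ₁bary⟩ := hπ12M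
  obtain ⟨hπ23snd, -⟩ := hπ23M
  haveI := hκ₁M
  set E := Euc d with hE
  -- measurability of the various rearrangement maps
  have hgm : Measurable fun p : E × E × E => (p.2.1, p.1, p.2.2) :=
    measurable_snd.fst.prodMk (measurable_fst.prodMk measurable_snd.snd)
  have h12m : Measurable fun q : E × E × E => (q.1, q.2.1) :=
    measurable_fst.prodMk measurable_snd.fst
  have h23m : Measurable fun q : E × E × E => (q.2.1, q.2.2) :=
    measurable_snd.fst.prodMk measurable_snd.snd
  have hψm : Measurable fun q : E × E × E => ((q.1, q.2.1), q.2.2) :=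
    h12m.prodMk measurable_snd.snd
  have hassocm : Measurable fun q : (E × E) × E => (q.1.1, q.1.2, q.2) :=
    measurable_fst.fst.prodMk (measurable_fst.snd.prodMk measurable_snd)
  -- the canonical conditional kernel of κ13 and its swap
  set θ : Kernel (E × E) E := κ13.condKernel with hθ
  set κb : Kernel (E × E) E := θ.comap Prod.swap measurable_swap with hκb
  -- basic marginal computations
  have hbase12 : (μ₂ ⊗ₘ κ13).map (fun p : E × E × E => (p.1, p.2.1)) = μ₂ ⊗ₘ κ13.fst := by
    rw [Kernel.fst_eq]; exact map_compProd_snd μ₂ κ13 measurable_fst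
  have hbase23 : (μ₂ ⊗ₘ κ13).map (fun p : E × E × E => (p.1, p.2.2)) = μ₂ ⊗ₘ κ13.snd := by
    rw [Kernel.snd_eq]; exact map_compProd_snd μ₂ κ13 measurable_snd
  have hmap12 : π.map (fun q : E × E × E => (q.1, q.2.1)) = (μ₂ ⊗ₘ κ13.fst).map Prod.swap := by
    rw [hπdis, Measure.map_map h12m hgm, ← hbase12,
      Measure.map_map measurable_swap (measurable_fst.prodMk measurable_snd.fst)]
    rfl
  have hmap23 : π.map (fun q : E × E × E => (q.2.1, q.2.2)) = μ₂ ⊗ₘ κ13.snd := by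
    rw [hπdis, Measure.map_map h23m hgm, ← hbase23]
    rfl
  have hmapρ : π.map (fun q : E × E × E => ((q.1, q.2.1), q.2.2))
      = ((μ₂ ⊗ₘ κ13.fst).map Prod.swap) ⊗ₘ κb := by
    rw [hπdis, Measure.map_map hψm hgm]
    have hcomp : ((fun q : E × E × E => ((q.1, q.2.1), q.2.2))
        ∘ (fun p : E × E × E => (p.2.1, p.1, p.2.2)))
        = fun p : E × E × E => ((p.2.1, p.1), p.2.2) := rfl
    rw [hcomp]
    conv_lhs => rw [← Kernel.disintegrate κ13 κ13.condKernel]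
    exact map_compProd_compProd μ₂ κ13.fst κ13.condKernel
  -- measurability of the barycenter function
  have hSM : StronglyMeasurable fun p : E × E => ∫ z, z ∂(θ p) :=
    MeasureTheory.StronglyMeasurable.integral_kernel_prod_right'
      (κ := θ) (measurable_snd.stronglyMeasurable)
  have hset : MeasurableSet {p : E × E | ∫ z, z ∂(θ p) = p.1} :=
    measurableSet_eq_fun hSM.measurable measurable_fst
  have hsetSwap : MeasurableSet {p : E × E | ∫ z, z ∂(κb p) = p.2} :=
    measurableSet_eq_fun (hSM.measurable.comp measurable_swap) measurable_snd
  haveI : IsFiniteMeasure π12 := by rw [hπ12dis]; infer_instance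
  constructor
  · rintro ⟨⟨hm1, hm2, hm3, κa, κb', hκaM, hκb'M, hπstruct, hκa_bary, hκb'_bary⟩, hproj12, hproj23⟩
    haveI := hκaM; haveI := hκb'M
    have hc12 : μ₂ ⊗ₘ κ13.fst = μ₂ ⊗ₘ κ12 := by
      apply map_swap_inj
      rw [← hmap12, hproj12, hπ12dis]
    have hfst_ae : ∀ᵐ x₂ ∂μ₂, κ13.fst x₂ = κ12 x₂ := kernel_ae_eq_of_compProd_eq hc12
    have hc23 : μ₂ ⊗ₘ κ13.snd = μ₂ ⊗ₘ κ32 := by rw [← hmap23, hproj23, hπ23dis]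
    have hsnd_ae : ∀ᵐ x₂ ∂μ₂, κ13.snd x₂ = κ32 x₂ := kernel_ae_eq_of_compProd_eq hc23
    have hμκa : μ₁ ⊗ₘ κa = π12 := by
      rw [← hproj12, hπstruct, Measure.map_map h12m hassocm]
      have hcomp : ((fun q : E × E × E => (q.1, q.2.1))
          ∘ (fun q : (E × E) × E => (q.1.1, q.1.2, q.2))) = Prod.fst := rfl
      rw [hcomp]
      exact (Measure.fst_compProd _ _).symm
    have hρ1 : π.map (fun q : E × E × E => ((q.1, q.2.1), q.2.2)) = π12 ⊗ₘ κb' := by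
      rw [hπstruct, Measure.map_map hψm hassocm]
      have hcomp : ((fun q : E × E × E => ((q.1, q.2.1), q.2.2))
          ∘ (fun q : (E × E) × E => (q.1.1, q.1.2, q.2))) = id := rfl
      rw [hcomp, Measure.map_id, hμκa]
    have hρ2 : π.map (fun q : E × E × E => ((q.1, q.2.1), q.2.2)) = π12 ⊗ₘ κb := by
      rw [hmapρ, hc12, ← hπ12dis]
    have hbM : ∀ᵐ p ∂π12, κb' p = κb p :=
      kernel_ae_eq_of_compProd_eq (by rw [← hρ1, hρ2])
    have hbary' : ∀ᵐ p ∂π12, ∫ z, z ∂(κb p) = p.2 := by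
      have hb := hκb'_bary
      rw [hμκa] at hb
      filter_upwards [hb, hbM] with p h1 h2
      rw [← h2]; exact h1
    have hbary2 : ∀ᵐ q ∂(μ₂ ⊗ₘ κ12), ∫ z, z ∂(θ q) = q.1 := by
      rw [hπ12dis] at hbary'
      rw [MeasureTheory.ae_map_iff measurable_swap.aemeasurable hsetSwap] at hbary'
      filter_upwards [hbary'] with q hq using hq
    have hbary3 : ∀ᵐ x₂ ∂μ₂, ∀ᵐ x₁ ∂(κ12 x₂), ∫ z, z ∂(θ (x₂, x₁)) = x₂ :=
      Measure.ae_ae_of_ae_compProd hbary2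
    filter_upwards [hfst_ae, hsnd_ae, hbary3] with x₂ h1 h2 h3
    refine ⟨?_, θ.comap (fun x₁ => (x₂, x₁)) measurable_prodMk_left, inferInstance, ?_, ?_⟩
    · rw [← Kernel.snd_apply, h2]
    · conv_lhs => rw [← Kernel.disintegrate κ13 κ13.condKernel]
      rw [kernel_compProd_apply', Kernel.fst_apply, ← Kernel.fst_apply, h1]
    · filter_upwards [h3] with x₁ hx₁ using hx₁
  · intro hae
    have hsnd_ae : ∀ᵐ x₂ ∂μ₂, κ13.snd x₂ = κ32 x₂ := by
      filter_upwards [hae] with x₂ h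
      rw [Kernel.snd_apply]; exact h.1
    have hfst_ae : ∀ᵐ x₂ ∂μ₂, κ13.fst x₂ = κ12 x₂ := by
      filter_upwards [hae] with x₂ h
      obtain ⟨-, κ', hκ'M, hdis, -⟩ := h
      haveI := hκ'M
      rw [Kernel.fst_apply, hdis]
      exact Measure.fst_compProd _ _
    have hbary3 : ∀ᵐ x₂ ∂μ₂, ∀ᵐ x₁ ∂(κ12 x₂), ∫ z, z ∂(θ (x₂, x₁)) = x₂ := by
      filter_upwards [hae, hfst_ae] with x₂ h hf
      obtain ⟨-, κ', hκ'M, hdis, hb⟩ := h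
      haveI := hκ'M
      have heq : κ12 x₂ ⊗ₘ κ' = κ12 x₂ ⊗ₘ (θ.comap (fun x₁ => (x₂, x₁)) measurable_prodMk_left) := by
        rw [← hdis]
        conv_lhs => rw [← Kernel.disintegrate κ13 κ13.condKernel]
        rw [kernel_compProd_apply', Kernel.fst_apply, ← Kernel.fst_apply, hf]
      have huniq : ∀ᵐ x₁ ∂(κ12 x₂), κ' x₁
          = (θ.comap (fun x₁ => (x₂, x₁)) measurable_prodMk_left) x₁ :=
        kernel_ae_eq_of_compProd_eq heq
      filter_upwards [huniq, hb] with x₁ h1 h2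
      rw [← Kernel.comap_apply θ measurable_prodMk_left x₁, ← h1]
      exact h2
    have hc12 : μ₂ ⊗ₘ κ13.fst = μ₂ ⊗ₘ κ12 := Measure.compProd_congr hfst_ae
    have hc23 : μ₂ ⊗ₘ κ13.snd = μ₂ ⊗ₘ κ32 := Measure.compProd_congr hsnd_ae
    have hproj12 : π.map (fun q : E × E × E => (q.1, q.2.1)) = π12 := by
      rw [hmap12, hc12, ← hπ12dis]
    have hproj23 : π.map (fun q : E × E × E => (q.2.1, q.2.2)) = π23 := by
      rw [hmap23, hc23, ← hπ23dis]
    have hb4 : ∀ᵐ q ∂(μ₂ ⊗ₘ κ12), ∫ z, z ∂(θ q) = q.1 :=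
      Measure.ae_compProd_of_ae_ae hset hbary3
    refine ⟨⟨?_, ?_, ?_, κ₁, κb, hκ₁M, inferInstance, ?_, hκ₁bary, ?_⟩, hproj12, hproj23⟩
    · have h1 : π.map (fun q : E × E × E => q.1) = π12.map Prod.fst := by
        rw [← hproj12, Measure.map_map measurable_fst h12m]
        rfl
      rw [h1, hπ12eq]
      exact Measure.fst_compProd _ _
    · rw [hπdis, Measure.map_map measurable_snd.fst hgm]
      have hcomp : ((fun q : E × E × E => q.2.1)
          ∘ (fun p : E × E × E => (p.2.1, p.1, p.2.2))) = Prod.fst := rfl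
      rw [hcomp]
      exact Measure.fst_compProd _ _
    · have h1 : π.map (fun q : E × E × E => q.2.2) = π23.map Prod.snd := by
        rw [← hproj23, Measure.map_map measurable_snd h23m]
        rfl
      rw [h1]; exact hπ23snd
    · have h1 : μ₁ ⊗ₘ κ₁ = (μ₂ ⊗ₘ κ13.fst).map Prod.swap := by
        rw [← hπ12eq, hπ12dis, hc12]
      rw [h1, ← hmapρ, Measure.map_map hassocm hψm]
      have hcomp : ((fun q : (E × E) × E => (q.1.1, q.1.2, q.2))
          ∘ (fun q : E × E × E => ((q.1, q.2.1), q.2.2))) = id := rfl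
      rw [hcomp, Measure.map_id]
    · have h1 : μ₁ ⊗ₘ κ₁ = (μ₂ ⊗ₘ κ12).map Prod.swap := by rw [← hπ12eq, hπ12dis]
      rw [h1, MeasureTheory.ae_map_iff measurable_swap.aemeasurable hsetSwap]
      filter_upwards [hb4] with q hq using hq


end MOT
end
end

section
/- Consecutive optimality: Let μ₁ ⪯_c ⋯ ⪯_c μ_n be probability measures on compact subsets of ℝ^d in convex order. For each i = 1,…,n−1 let π*_{i,i+1} ∈ Π_M(μ_i, μ_{i+1}) be an optimal martingale coupling for the two-period MOT problem with continuous cost c_i(x_i, x_{i+1}). Then every coupling π* ∈ Π_M(μ₁,…,μ_n) whose consecutive twofold projections satisfy Proj_{i,i+1}(π*) = π*_{i,i+1} for all i is optimal for the multi-period MOT problem with cost c(x₁,…,x_n) = Σ_{i=1}^{n−1} c_i(x_i, x_{i+1}). Conversely, if π ∈ Π_M(μ₁,…,μ_n) is optimal for this cost, then each twofold projection Proj_{i,i+1}(π) is optimal for the corresponding two-period MOT problem between μ_i and μ_{i+1} with cost c_i. -/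
/-!
The cost is a sum of consecutive pair costs and all marginals are compactly supported, so the
cost of a multi-period martingale coupling is the sum of the two-period costs of its consecutive
projections. Each such projection is a two-period martingale coupling: disintegrating it, the
barycenter defect `∫ y κ(x, dy) - x` integrates to zero against every smooth compactly supported
test function of `x`, hence vanishes. This gives the first half. For the converse, chaining the
kernels of the optimal `π*_{i,i+1}` into a Markov chain produces a multi-period martingale
coupling whose projections are the `π*_{i,i+1}`; an optimal `π` costs no more than it, so the
projection costs of `π`, each at least the corresponding two-period optimum, must all attain it.
-/

open MeasureTheory ProbabilityTheory Filter Topology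

noncomputable section

namespace MOT

variable {d : ℕ}

/-- `π` is an `(n+1)`-period martingale coupling of the marginals `μ i`: each marginal is
`μ i`, and for each consecutive pair of indices the conditional expectation of the next
coordinate given all previous ones equals the current coordinate (expressed via bounded
continuous test functions depending only on the first coordinates). -/
def IsMartCouplingN {d n : ℕ} (μ : Fin (n + 1) → Measure (Euc d))
    (π : Measure (Fin (n + 1) → Euc d)) : Prop :=
  (∀ i, π.map (fun x => x i) = μ i) ∧
  ∀ i : Fin n, ∀ g : (Fin (n + 1) → Euc d) → ℝ, Continuous g →
    (∃ C, ∀ x, |g x| ≤ C) →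
    (∀ x y : Fin (n + 1) → Euc d, (∀ k, k ≤ i.castSucc → x k = y k) → g x = g y) →
    ∫ x, g x • (x i.succ - x i.castSucc) ∂π = 0


theorem measurable_finSnoc {E : Type*} [MeasurableSpace E] {m : ℕ} :
    Measurable fun q : (Fin m → E) × E => (Fin.snoc q.1 q.2 : Fin (m + 1) → E) := by
  refine measurable_pi_lambda _ fun j => ?_
  cases j using Fin.lastCases with
  | last => simpa using measurable_snd
  | cast j =>
    simp only [Fin.snoc_castSucc]
    exact (measurable_pi_apply j).comp measurable_fst

theorem map_prodMap_compProd_comap {α β γ : Type*} [MeasurableSpace α] [MeasurableSpace β]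
    [MeasurableSpace γ] (μ : Measure α) [SFinite μ] {f : α → β} (hf : Measurable f)
    (κ : Kernel β γ) [IsSFiniteKernel κ] :
    (μ ⊗ₘ κ.comap f hf).map (Prod.map f id) = μ.map f ⊗ₘ κ := by
  ext s hs
  rw [Measure.map_apply (hf.prodMap measurable_id) hs, Measure.compProd_apply (by measurability),
    Measure.compProd_apply hs, lintegral_map (Kernel.measurable_kernel_prodMk_left hs) hf]
  rfl

theorem integrable_eval_of_map_eq {ι E : Type*} [NormedAddCommGroup E] [MeasurableSpace E]
    {π : Measure (ι → E)} {j : ι} {ν : Measure E} (hπ : π.map (· j) = ν)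
    (hν : Integrable id ν) : Integrable (· j) π := by
  subst hπ
  exact (integrable_map_measure hν.1 (measurable_pi_apply j).aemeasurable).1 hν

theorem integrable_of_ae_mem_isCompact {X F : Type*} [TopologicalSpace X] [T2Space X]
    [MeasurableSpace X] [OpensMeasurableSpace X] [NormedAddCommGroup F] {μ : Measure X}
    [IsFiniteMeasure μ] {K : Set X} (hK : IsCompact K) (hμK : ∀ᵐ x ∂μ, x ∈ K) {f : X → F}
    (hf : ContinuousOn f K) : Integrable f μ := by
  have h := hf.integrableOn_compact hK (μ := μ)
  rwa [IntegrableOn, Measure.restrict_eq_self_of_ae_mem hμK] at h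

section Barycenter

variable {α E : Type*} [MeasurableSpace α] [NormedAddCommGroup E] [NormedSpace ℝ E]
  [CompleteSpace E] [MeasurableSpace E]
  {M : Measure α} [SFinite M] {η : Kernel α E} [IsMarkovKernel η] {f : α → E}

theorem ae_integral_sub_eq_of_integrable_compProd
    (hint : Integrable (fun q : α × E => q.2 - f q.1) (M ⊗ₘ η)) :
    ∀ᵐ a ∂M, ∫ y, (y - f a) ∂η a = ∫ y, y ∂η a - f a := by
  filter_upwards [((Measure.integrable_compProd_iff hint.aestronglyMeasurable).1 hint).1]
    with a ha
  have hy : Integrable (fun y => y) (η a) := by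
    simpa only [sub_add_cancel] using (integrable_add_const_iff (c := f a)).2 ha
  rw [integral_sub hy (integrable_const _), integral_const, probReal_univ, one_smul]

theorem integrable_integral_sub_of_integrable_compProd
    (hint : Integrable (fun q : α × E => q.2 - f q.1) (M ⊗ₘ η)) :
    Integrable (fun a => ∫ y, y ∂η a - f a) M := by
  have h := Integrable.integral_compProd (κ := Kernel.const Unit M)
    (η := Kernel.prodMkLeft Unit η) (a := ()) hint
  exact (h.congr (ae_integral_sub_eq_of_integrable_compProd hint) :)

theorem integral_compProd_smul_sub
    (hint : Integrable (fun q : α × E => q.2 - f q.1) (M ⊗ₘ η)) {G : α → ℝ} (hG : Measurable G)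
    {C : ℝ} (hGC : ∀ a, |G a| ≤ C) :
    ∫ q, G q.1 • (q.2 - f q.1) ∂(M ⊗ₘ η) = ∫ a, G a • (∫ y, y ∂η a - f a) ∂M := by
  have hGint : Integrable (fun q : α × E => G q.1 • (q.2 - f q.1)) (M ⊗ₘ η) :=
    hint.bdd_smul C (hG.comp measurable_fst).aestronglyMeasurable
      (Eventually.of_forall fun q => hGC q.1)
  rw [Measure.integral_compProd hGint]
  refine integral_congr_ae ?_
  filter_upwards [ae_integral_sub_eq_of_integrable_compProd hint] with a ha
  rw [integral_smul, ha]

theorem integral_compProd_smul_sub_eq_zero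
    (hint : Integrable (fun q : α × E => q.2 - f q.1) (M ⊗ₘ η))
    (hbar : ∀ᵐ a ∂M, ∫ y, y ∂η a = f a) {G : α → ℝ} (hG : Measurable G) {C : ℝ}
    (hGC : ∀ a, |G a| ≤ C) :
    ∫ q, G q.1 • (q.2 - f q.1) ∂(M ⊗ₘ η) = 0 := by
  rw [integral_compProd_smul_sub hint hG hGC, integral_eq_zero_of_ae]
  filter_upwards [hbar] with a ha
  simp [ha]

end Barycenter

open scoped ContDiff in
theorem ae_integral_eq_of_integral_smul_sub_eq_zero {E : Type*} [NormedAddCommGroup E]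
    [NormedSpace ℝ E] [FiniteDimensional ℝ E] [MeasurableSpace E] [BorelSpace E]
    {μ : Measure E} [SFinite μ] {κ : Kernel E E} [IsMarkovKernel κ]
    (hint : Integrable (fun p : E × E => p.2 - p.1) (μ ⊗ₘ κ))
    (h : ∀ g : E → ℝ, ContDiff ℝ ∞ g → HasCompactSupport g →
      ∫ p, g p.1 • (p.2 - p.1) ∂(μ ⊗ₘ κ) = 0) :
    ∀ᵐ x ∂μ, ∫ y, y ∂κ x = x := by
  have hloc := (integrable_integral_sub_of_integrable_compProd (f := id) hint).locallyIntegrable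
  have hzero : ∀ᵐ x ∂μ, ∫ y, y ∂κ x - id x = 0 :=
    ae_eq_zero_of_integral_contDiff_smul_eq_zero hloc fun g hg hgs => by
      obtain ⟨C, hC⟩ := hgs.exists_bound_of_continuous hg.continuous
      rw [← integral_compProd_smul_sub (f := id) hint hg.continuous.measurable (C := C)
        fun a => (Real.norm_eq_abs _).symm.trans_le (hC a)]
      exact h g hg hgs
  filter_upwards [hzero] with x hx using sub_eq_zero.1 hx

section MarkovChain

variable {E : Type*} [MeasurableSpace E]

/-- The law of the states `0, …, k` of the Markov chain started from `μ₀` whose transition from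
time `j` to time `j + 1` is `κ j`. -/
def markovChain (μ₀ : Measure E) (κ : ℕ → Kernel E E) : (k : ℕ) → Measure (Fin (k + 1) → E)
  | 0 => μ₀.map fun x _ => x
  | k + 1 => (markovChain μ₀ κ k ⊗ₘ (κ k).comap (· (Fin.last k)) (measurable_pi_apply _)).map
      fun q => Fin.snoc q.1 q.2

variable (μ₀ : Measure E) [SFinite μ₀] (κ : ℕ → Kernel E E) [∀ k, IsMarkovKernel (κ k)]

instance sFinite_markovChain (k : ℕ) : SFinite (markovChain μ₀ κ k) := by
  cases k <;> rw [markovChain] <;> infer_instance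

theorem markovChain_map_castSucc (k : ℕ) :
    (markovChain μ₀ κ (k + 1)).map (· ∘ Fin.castSucc) = markovChain μ₀ κ k := by
  rw [markovChain, Measure.map_map (by fun_prop) measurable_finSnoc]
  have hfst : ((· ∘ Fin.castSucc) ∘ fun q : (Fin (k + 1) → E) × E => Fin.snoc q.1 q.2) =
      Prod.fst := by
    funext q
    exact Fin.snoc_comp_castSucc
  rw [hfst]
  exact Measure.fst_compProd _ _

theorem markovChain_map_castLE {m k : ℕ} (h : m ≤ k) :
    (markovChain μ₀ κ k).map (· ∘ Fin.castLE (Nat.succ_le_succ h)) = markovChain μ₀ κ m := by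
  induction k, h using Nat.le_induction with
  | base => exact Measure.map_id
  | succ k hmk ih =>
    have hcomp : (· ∘ Fin.castLE (Nat.succ_le_succ (hmk.trans k.le_succ))) =
        (· ∘ Fin.castLE (Nat.succ_le_succ hmk)) ∘ (· ∘ Fin.castSucc : (Fin (k + 2) → E) → _) :=
      rfl
    rw [hcomp, ← Measure.map_map (by fun_prop) (by fun_prop), markovChain_map_castSucc, ih]

theorem markovChain_map_prefix_succ {n : ℕ} (i : Fin n) :
    (markovChain μ₀ κ n).map
        (fun x => (x ∘ Fin.castLE (by omega : (i : ℕ) + 1 ≤ n + 1), x i.succ)) =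
      markovChain μ₀ κ i ⊗ₘ (κ i).comap (· (Fin.last i)) (measurable_pi_apply _) := by
  have hsplit : (fun x : Fin (n + 1) → E => (x ∘ Fin.castLE (by omega), x i.succ)) =
      (fun p : Fin (i + 2) → E => (p ∘ Fin.castSucc, p (Fin.last (i + 1)))) ∘
        (· ∘ Fin.castLE (Nat.succ_le_succ i.isLt)) := rfl
  rw [hsplit, ← Measure.map_map (by fun_prop) (by fun_prop), markovChain_map_castLE μ₀ κ i.isLt,
    markovChain, Measure.map_map (by fun_prop) measurable_finSnoc]
  have hid : ((fun p : Fin (i + 2) → E => (p ∘ Fin.castSucc, p (Fin.last (i + 1)))) ∘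
      fun q : (Fin (i + 1) → E) × E => Fin.snoc q.1 q.2) = id := by
    funext q
    exact Prod.ext Fin.snoc_comp_castSucc (Fin.snoc_last (α := fun _ => E) q.2 q.1)
  rw [hid, Measure.map_id]

theorem markovChain_map_pair {n : ℕ} (i : Fin n) :
    (markovChain μ₀ κ n).map (fun x => (x i.castSucc, x i.succ)) =
      (markovChain μ₀ κ i).map (· (Fin.last i)) ⊗ₘ κ i := by
  have hsplit : (fun x : Fin (n + 1) → E => (x i.castSucc, x i.succ)) =
      Prod.map (· (Fin.last i)) id ∘ fun x => (x ∘ Fin.castLE (by omega), x i.succ) := rfl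
  rw [hsplit, ← Measure.map_map (by fun_prop) (by fun_prop), markovChain_map_prefix_succ,
    map_prodMap_compProd_comap]

theorem markovChain_map_last {n : ℕ} {μ : Fin (n + 1) → Measure E} [SFinite (μ 0)]
    (hstep : ∀ i : Fin n, (μ i.castSucc ⊗ₘ κ i).snd = μ i.succ) (i : Fin (n + 1)) :
    (markovChain (μ 0) κ i).map (· (Fin.last i)) = μ i := by
  induction i using Fin.induction with
  | zero =>
    change (markovChain (μ 0) κ 0).map (· (Fin.last 0)) = μ 0
    rw [markovChain, Measure.map_map (by fun_prop) (by fun_prop)]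
    exact Measure.map_id
  | succ i ih =>
    change (markovChain (μ 0) κ i).map (· (Fin.last i)) = μ i.castSucc at ih
    have hpair : (markovChain (μ 0) κ (i + 1)).map
        (fun x => (x (Fin.last i).castSucc, x (Fin.last i).succ)) =
          (markovChain (μ 0) κ i).map (· (Fin.last i)) ⊗ₘ κ i :=
      markovChain_map_pair (μ 0) κ (Fin.last i)
    rw [← hstep i, ← ih, ← hpair, Measure.snd, Measure.map_map (by fun_prop) (by fun_prop)]
    rfl

theorem markovChain_map_eval {n : ℕ} {μ : Fin (n + 1) → Measure E} [SFinite (μ 0)]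
    (hstep : ∀ i : Fin n, (μ i.castSucc ⊗ₘ κ i).snd = μ i.succ) (i : Fin (n + 1)) :
    (markovChain (μ 0) κ n).map (· i) = μ i := by
  have hi : (i : ℕ) ≤ n := Nat.lt_succ_iff.1 i.isLt
  have hsplit : (fun x : Fin (n + 1) → E => x i) =
      (· (Fin.last i)) ∘ (· ∘ Fin.castLE (Nat.succ_le_succ hi)) := rfl
  rw [hsplit, ← Measure.map_map (by fun_prop) (by fun_prop), markovChain_map_castLE _ κ hi,
    markovChain_map_last κ hstep]

end MarkovChain

theorem markovChain_integral_smul_sub_eq_zero {E : Type*} [NormedAddCommGroup E]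
    [NormedSpace ℝ E] [CompleteSpace E] [MeasurableSpace E] [BorelSpace E]
    [SecondCountableTopology E] (μ₀ : Measure E) [SFinite μ₀] (κ : ℕ → Kernel E E)
    [∀ k, IsMarkovKernel (κ k)] {n : ℕ} (i : Fin n)
    (hbar : ∀ᵐ x ∂(markovChain μ₀ κ i).map (· (Fin.last i)), ∫ y, y ∂κ i x = x)
    (hint : Integrable (fun x => x i.succ - x i.castSucc) (markovChain μ₀ κ n))
    {g : (Fin (n + 1) → E) → ℝ} (hg : Measurable g) {C : ℝ} (hgC : ∀ x, |g x| ≤ C)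
    (hgi : ∀ x y : Fin (n + 1) → E, (∀ k, k ≤ i.castSucc → x k = y k) → g x = g y) :
    ∫ x, g x • (x i.succ - x i.castSucc) ∂(markovChain μ₀ κ n) = 0 := by
  set P := fun x : Fin (n + 1) → E => (x ∘ Fin.castLE (by omega : (i : ℕ) + 1 ≤ n + 1), x i.succ)
  have hP : Measurable P := by fun_prop
  -- `g` only sees the first `i + 1` coordinates, so it factors through `x ↦ x ∘ Fin.castLE _`
  set G : (Fin (i + 1) → E) → ℝ := fun q => g fun j => q ⟨min j i, by omega⟩
  have hG : Measurable G := hg.comp (measurable_pi_lambda _ fun _ => measurable_pi_apply _)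
  have hgG (x : Fin (n + 1) → E) :
      g x • (x i.succ - x i.castSucc) = G (P x).1 • ((P x).2 - (P x).1 (Fin.last i)) := by
    congr 1
    exact hgi _ _ fun k hk => congrArg x (Fin.ext (min_eq_left (show (k : ℕ) ≤ i from hk)).symm)
  have hdiff : Measurable fun q : (Fin (i + 1) → E) × E => q.2 - q.1 (Fin.last i) := by fun_prop
  have hint' : Integrable (fun q : (Fin (i + 1) → E) × E => q.2 - q.1 (Fin.last i))
      (markovChain μ₀ κ i ⊗ₘ (κ i).comap (· (Fin.last i)) (measurable_pi_apply _)) := by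
    rw [← markovChain_map_prefix_succ]
    exact (integrable_map_measure hdiff.aestronglyMeasurable hP.aemeasurable).2 hint
  have hbar' : ∀ᵐ q ∂markovChain μ₀ κ i,
      ∫ y, y ∂(κ i).comap (· (Fin.last i)) (measurable_pi_apply _) q = q (Fin.last i) :=
    ae_of_ae_map (measurable_pi_apply _).aemeasurable hbar
  have hF : Measurable fun q : (Fin (i + 1) → E) × E => G q.1 • (q.2 - q.1 (Fin.last i)) :=
    (hG.comp measurable_fst).smul hdiff
  simp_rw [hgG]
  rw [← integral_map hP.aemeasurable hF.aestronglyMeasurable, markovChain_map_prefix_succ]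
  exact integral_compProd_smul_sub_eq_zero hint' hbar' hG fun _ => hgC _

open scoped ContDiff in
theorem isMartCoupling2_of_integral_smul_sub_eq_zero {ρ : Measure (Euc d × Euc d)}
    [IsFiniteMeasure ρ] (hint : Integrable (fun p => p.2 - p.1) ρ)
    (h : ∀ g : Euc d → ℝ, ContDiff ℝ ∞ g → HasCompactSupport g →
      ∫ p, g p.1 • (p.2 - p.1) ∂ρ = 0) :
    IsMartCoupling2 ρ.fst ρ.snd ρ := by
  refine ⟨rfl, ρ.condKernel, inferInstance, (ρ.disintegrate ρ.condKernel).symm, ?_⟩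
  rw [← ρ.disintegrate ρ.condKernel] at hint h
  exact ae_integral_eq_of_integral_smul_sub_eq_zero hint h

theorem integral_sum_comp_pair {E : Type*} [TopologicalSpace E] [T2Space E]
    [SecondCountableTopology E] [MeasurableSpace E] [BorelSpace E] {n : ℕ}
    {X : Fin (n + 1) → Set E} (hX : ∀ i, IsCompact (X i)) {π : Measure (Fin (n + 1) → E)}
    [IsFiniteMeasure π] (hπX : ∀ i, ∀ᵐ x ∂π, x i ∈ X i) {c : Fin n → E × E → ℝ}
    (hc : ∀ i, Continuous (c i)) :
    ∫ x, ∑ i : Fin n, c i (x i.castSucc, x i.succ) ∂π =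
      ∑ i : Fin n, ∫ p, c i p ∂(π.map fun x => (x i.castSucc, x i.succ)) := by
  have hpair (i : Fin n) : Measurable fun x : Fin (n + 1) → E => (x i.castSucc, x i.succ) := by
    fun_prop
  have hint (i : Fin n) : Integrable (c i) (π.map fun x => (x i.castSucc, x i.succ)) := by
    have hK := (hX i.castSucc).prod (hX i.succ)
    refine integrable_of_ae_mem_isCompact hK ?_ (hc i).continuousOn
    refine (ae_map_iff (hpair i).aemeasurable hK.measurableSet).2 ?_
    filter_upwards [hπX i.castSucc, hπX i.succ] with x h₁ h₂ using ⟨h₁, h₂⟩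
  rw [integral_finsetSum (f := fun i (x : Fin (n + 1) → E) => c i (x i.castSucc, x i.succ)) _
    fun i _ => (hint i).comp_measurable (hpair i)]
  exact Finset.sum_congr rfl fun i _ =>
    (integral_map (hpair i).aemeasurable (hc i).aestronglyMeasurable).symm

namespace IsMartCouplingN

variable {n : ℕ} {μ : Fin (n + 1) → Measure (Euc d)} [∀ i, IsProbabilityMeasure (μ i)]
  {π : Measure (Fin (n + 1) → Euc d)}

theorem isProbabilityMeasure (hπ : IsMartCouplingN μ π) : IsProbabilityMeasure π := by
  have h0 : IsProbabilityMeasure (π.map (· 0)) := hπ.1 0 ▸ inferInstance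
  exact (Measure.isProbabilityMeasure_map_iff (measurable_pi_apply 0).aemeasurable).1 h0

theorem isMartCoupling2_map_pair (hπ : IsMartCouplingN μ π) (hμ : ∀ j, Integrable id (μ j))
    (i : Fin n) :
    IsMartCoupling2 (μ i.castSucc) (μ i.succ) (π.map fun x => (x i.castSucc, x i.succ)) := by
  have := hπ.isProbabilityMeasure
  have hpair : Measurable fun x : Fin (n + 1) → Euc d => (x i.castSucc, x i.succ) := by
    fun_prop
  have hint : Integrable (fun p => p.2 - p.1) (π.map fun x => (x i.castSucc, x i.succ)) :=
    (integrable_map_measure (by fun_prop) hpair.aemeasurable).2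
      ((integrable_eval_of_map_eq (hπ.1 _) (hμ _)).sub (integrable_eval_of_map_eq (hπ.1 _) (hμ _)))
  have h := isMartCoupling2_of_integral_smul_sub_eq_zero hint fun g hg hgs => by
    obtain ⟨C, hC⟩ := hgs.exists_bound_of_continuous hg.continuous
    rw [integral_map hpair.aemeasurable (by fun_prop)]
    exact hπ.2 i (fun x => g (x i.castSucc)) (by fun_prop)
      ⟨C, fun x => (Real.norm_eq_abs _).symm.trans_le (hC _)⟩
      fun x y hxy => congrArg g (hxy _ le_rfl)
  rwa [Measure.fst_map_prodMk (measurable_pi_apply _),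
    Measure.snd_map_prodMk (measurable_pi_apply _), hπ.1, hπ.1] at h

theorem integral_sum_cost {X : Fin (n + 1) → Set (Euc d)} (hX : ∀ i, IsCompact (X i))
    (hμX : ∀ i, μ i (X i)ᶜ = 0) (hπ : IsMartCouplingN μ π) {c : Fin n → Euc d × Euc d → ℝ}
    (hc : ∀ i, Continuous (c i)) :
    ∫ x, ∑ i : Fin n, c i (x i.castSucc, x i.succ) ∂π =
      ∑ i : Fin n, ∫ p, c i p ∂(π.map fun x => (x i.castSucc, x i.succ)) := by
  have := hπ.isProbabilityMeasure
  refine integral_sum_comp_pair hX (fun i => ?_) hc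
  exact ae_of_ae_map (measurable_pi_apply i).aemeasurable (hπ.1 i ▸ mem_ae_iff.2 (hμX i))

end IsMartCouplingN

theorem exists_isMartCouplingN_map_pair_eq {n : ℕ} {μ : Fin (n + 1) → Measure (Euc d)}
    [∀ i, IsProbabilityMeasure (μ i)] (hμ : ∀ i, Integrable id (μ i))
    {πs : Fin n → Measure (Euc d × Euc d)}
    (hπs : ∀ i, IsMartCoupling2 (μ i.castSucc) (μ i.succ) (πs i)) :
    ∃ π, IsMartCouplingN μ π ∧ ∀ i : Fin n, π.map (fun x => (x i.castSucc, x i.succ)) = πs i := by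
  choose hsnd κ hκ hπκ hbar using hπs
  -- steps beyond `n` are never used; `Kernel.id` only keeps every kernel Markov
  let K : ℕ → Kernel (Euc d) (Euc d) := fun k => if h : k < n then κ ⟨k, h⟩ else Kernel.id
  have hK (i : Fin n) : K i = κ i := dif_pos i.isLt
  have (k : ℕ) : IsMarkovKernel (K k) := by unfold K; split <;> infer_instance
  have hstep (i : Fin n) : (μ i.castSucc ⊗ₘ K i).snd = μ i.succ := by
    rw [hK, ← hπκ]
    exact hsnd i
  have hlast (i : Fin n) : (markovChain (μ 0) K i).map (· (Fin.last i)) = μ i.castSucc :=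
    markovChain_map_last K hstep i.castSucc
  have hmarg := markovChain_map_eval K hstep
  refine ⟨markovChain (μ 0) K n, ⟨hmarg, fun i g hg ⟨C, hC⟩ hgi => ?_⟩, fun i => ?_⟩
  · refine markovChain_integral_smul_sub_eq_zero (μ 0) K i ?_ ?_ hg.measurable hC hgi
    · rw [hlast, hK]
      exact hbar i
    · exact (integrable_eval_of_map_eq (hmarg _) (hμ _)).sub
        (integrable_eval_of_map_eq (hmarg _) (hμ _))
  · rw [markovChain_map_pair, hlast, hK, hπκ]

theorem consecutive_optimality_general {d n : ℕ}
    (μ : Fin (n + 1) → Measure (Euc d)) [∀ i, IsProbabilityMeasure (μ i)]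
    (X : Fin (n + 1) → Set (Euc d)) (hX : ∀ i, IsCompact (X i))
    (hμX : ∀ i, μ i (X i)ᶜ = 0)
    (c : Fin n → Euc d × Euc d → ℝ) (hc : ∀ i, Continuous (c i))
    (πs : Fin n → Measure (Euc d × Euc d))
    (hπs : ∀ i, IsMartCoupling2 (μ i.castSucc) (μ i.succ) (πs i))
    (hπsopt : ∀ i, ∀ π', IsMartCoupling2 (μ i.castSucc) (μ i.succ) π' →
      ∫ p, c i p ∂(πs i) ≤ ∫ p, c i p ∂π') :
    (∀ π : Measure (Fin (n + 1) → Euc d), IsMartCouplingN μ π →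
      (∀ i : Fin n, π.map (fun x => (x i.castSucc, x i.succ)) = πs i) →
      ∀ π', IsMartCouplingN μ π' →
        ∫ x, (∑ i : Fin n, c i (x i.castSucc, x i.succ)) ∂π ≤
          ∫ x, (∑ i : Fin n, c i (x i.castSucc, x i.succ)) ∂π') ∧
    (∀ π : Measure (Fin (n + 1) → Euc d), IsMartCouplingN μ π →
      (∀ π', IsMartCouplingN μ π' →
        ∫ x, (∑ i : Fin n, c i (x i.castSucc, x i.succ)) ∂π ≤
          ∫ x, (∑ i : Fin n, c i (x i.castSucc, x i.succ)) ∂π') →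
      ∀ i : Fin n,
        IsMartCoupling2 (μ i.castSucc) (μ i.succ)
          (π.map (fun x => (x i.castSucc, x i.succ))) ∧
        ∀ π', IsMartCoupling2 (μ i.castSucc) (μ i.succ) π' →
          ∫ p, c i p ∂(π.map (fun x => (x i.castSucc, x i.succ))) ≤ ∫ p, c i p ∂π') := by
  have hμ (i : Fin (n + 1)) : Integrable id (μ i) :=
    integrable_of_ae_mem_isCompact (hX i) (mem_ae_iff.2 (hμX i)) continuousOn_id
  have hcost {π} (hπ : IsMartCouplingN μ π) := hπ.integral_sum_cost hX hμX hc
  refine ⟨fun π hπ hππs π' hπ' => ?_, fun π hπ hopt i => ⟨hπ.isMartCoupling2_map_pair hμ i, ?_⟩⟩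
  · rw [hcost hπ, hcost hπ']
    exact Finset.sum_le_sum fun i _ => hππs i ▸ hπsopt i _ (hπ'.isMartCoupling2_map_pair hμ i)
  · have hle (j : Fin n) := hπsopt j _ (hπ.isMartCoupling2_map_pair hμ j)
    obtain ⟨πt, hπt, hπtπs⟩ := exists_isMartCouplingN_map_pair_eq hμ hπs
    have hsum := hopt πt hπt
    simp only [hcost hπ, hcost hπt, hπtπs] at hsum
    have hattain := (Finset.sum_eq_sum_iff_of_le fun j _ => hle j).1
      (le_antisymm (Finset.sum_le_sum fun j _ => hle j) hsum) i (Finset.mem_univ i)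
    exact fun π' hπ' => hattain ▸ hπsopt i π' hπ'

/-- **Consecutive optimality.** If `π*_{i,i+1}` is optimal for the two-period MOT problem with
continuous cost `c i`, then every multi-period martingale coupling whose consecutive twofold
projections are the `π*_{i,i+1}` is optimal for the cost `Σᵢ cᵢ(xᵢ, xᵢ₊₁)`; conversely, the
consecutive twofold projections of any optimal multi-period coupling are optimal for the
corresponding two-period problems. -/
theorem consecutive_optimality {d n : ℕ}
    (μ : Fin (n + 1) → Measure (Euc d)) [∀ i, IsProbabilityMeasure (μ i)]
    (X : Fin (n + 1) → Set (Euc d)) (hX : ∀ i, IsCompact (X i))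
    (hμX : ∀ i, μ i (X i)ᶜ = 0)
    (hord : ∀ i : Fin n, ConvexOrder (μ i.castSucc) (μ i.succ))
    (c : Fin n → Euc d × Euc d → ℝ) (hc : ∀ i, Continuous (c i))
    (πs : Fin n → Measure (Euc d × Euc d))
    (hπs : ∀ i, IsMartCoupling2 (μ i.castSucc) (μ i.succ) (πs i))
    (hπsopt : ∀ i, ∀ π', IsMartCoupling2 (μ i.castSucc) (μ i.succ) π' →
      ∫ p, c i p ∂(πs i) ≤ ∫ p, c i p ∂π') :
    (∀ π : Measure (Fin (n + 1) → Euc d), IsMartCouplingN μ π →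
      (∀ i : Fin n, π.map (fun x => (x i.castSucc, x i.succ)) = πs i) →
      ∀ π', IsMartCouplingN μ π' →
        ∫ x, (∑ i : Fin n, c i (x i.castSucc, x i.succ)) ∂π ≤
          ∫ x, (∑ i : Fin n, c i (x i.castSucc, x i.succ)) ∂π') ∧
    (∀ π : Measure (Fin (n + 1) → Euc d), IsMartCouplingN μ π →
      (∀ π', IsMartCouplingN μ π' →
        ∫ x, (∑ i : Fin n, c i (x i.castSucc, x i.succ)) ∂π ≤
          ∫ x, (∑ i : Fin n, c i (x i.castSucc, x i.succ)) ∂π') →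
      ∀ i : Fin n,
        IsMartCoupling2 (μ i.castSucc) (μ i.succ)
          (π.map (fun x => (x i.castSucc, x i.succ))) ∧
        ∀ π', IsMartCoupling2 (μ i.castSucc) (μ i.succ) π' →
          ∫ p, c i p ∂(π.map (fun x => (x i.castSucc, x i.succ))) ≤ ∫ p, c i p ∂π') :=
  consecutive_optimality_general μ X hX hμX c hc πs hπs hπsopt

end MOT
end
end
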